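/- Let d ≥ 1, α ∈ (0, 2), p ∈ [0, α), and q ∈ [0, α). Define W(x,y) = ((1+|x|)^p + (1+|y|)^p) for |x-y| < 1 and ((1+|x|)^q + (1+|y|)^q) for |x-y| ≥ 1, and J(x, dy) = |x-y|^{-d-α} dy. Then there is a constant c > 0 such that for all l ≥ 1, ∫_{|x| ≤ l} ∫_{ℝ^d} (1 ∧ (|x-y|²/l²)) W(x,y) |x-y|^{-d-α} dy dx ≤ c (l^d + l^{d+p-α}). In particular, since p < α, liminf_{l→∞} l^{-d} ∫_{|x| ≤ l} ∫ (1 ∧ |x-y|²/l²) W(x,y) J(x,dy) dx < ∞. -/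

import Mathlib

/-!
For `‖x‖ ≤ l` with `l ≥ 1`, the weight is at most `2 (2l (1 + ‖u‖))^p + 2 (2l (1 + ‖u‖))^q`,
where `u = l⁻¹ (x - y)`. After the substitution `y = x - l u`, the inner integral is therefore at
most `∑_{m ∈ {p, q}} 2^(m+1) l^(m-α) K_m`, where
`K_m = ∫ min(1, ‖u‖²) (1 + ‖u‖)^m ‖u‖^(-d-α) du`. This is finite because `α < 2` (near `0`) and
`m < α` (at infinity). Integrating over a ball of volume `l^d |B₁|` and using `l^(q-α) ≤ 1`
gives the bound. After division by `l^d` it becomes `c (1 + l^(p-α)) ≤ 2c`.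
-/

open MeasureTheory Metric Module Real Set

noncomputable section

def polyWeight {E : Type*} [NormedAddCommGroup E] (p q : ℝ) (x y : E) : ℝ :=
  if ‖x - y‖ < 1 then (1 + ‖x‖) ^ p + (1 + ‖y‖) ^ p else (1 + ‖x‖) ^ q + (1 + ‖y‖) ^ q

def truncatedStableKernel {E : Type*} [NormedAddCommGroup E] [NormedSpace ℝ E]
    (α m : ℝ) (w : E) : ℝ :=
  min 1 (‖w‖ ^ 2) * (1 + ‖w‖) ^ m * ‖w‖ ^ (-(finrank ℝ E : ℝ) - α)

end

lemma polyWeight_nonneg {E : Type*} [NormedAddCommGroup E] (p q : ℝ) (x y : E) :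
    0 ≤ polyWeight p q x y := by
  unfold polyWeight; split_ifs <;> positivity

section Pointwise

variable {E : Type*} [NormedAddCommGroup E] [NormedSpace ℝ E]

lemma truncatedStableKernel_nonneg (α m : ℝ) (w : E) : 0 ≤ truncatedStableKernel α m w := by
  unfold truncatedStableKernel; positivity

lemma truncatedStableKernel_le_rpow_of_norm_lt_one {α m : ℝ} (hm : 0 ≤ m) {w : E}
    (hw : ‖w‖ < 1) :
    truncatedStableKernel α m w ≤ 2 ^ m * ‖w‖ ^ (-((finrank ℝ E : ℝ) + α - 2)) := by
  rcases eq_or_ne w 0 with rfl | hw0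
  · calc truncatedStableKernel α m (0 : E) = 0 := by simp [truncatedStableKernel]
      _ ≤ _ := by positivity
  have hwpos : 0 < ‖w‖ := norm_pos_iff.mpr hw0
  calc truncatedStableKernel α m w
      ≤ ‖w‖ ^ (2 : ℝ) * 2 ^ m * ‖w‖ ^ (-(finrank ℝ E : ℝ) - α) := by
        unfold truncatedStableKernel
        rw [rpow_two]
        gcongr
        · exact min_le_right _ _
        · linarith
    _ = 2 ^ m * ‖w‖ ^ (-((finrank ℝ E : ℝ) + α - 2)) := by
        rw [mul_right_comm, ← rpow_add hwpos]
        ring_nf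

lemma truncatedStableKernel_le_one_add_norm_rpow {α m : ℝ} (hα : 0 ≤ α) {w : E}
    (hw : 1 ≤ ‖w‖) :
    truncatedStableKernel α m w ≤
      2 ^ ((finrank ℝ E : ℝ) + α) * (1 + ‖w‖) ^ (-((finrank ℝ E : ℝ) + α - m)) := by
  have hw2 : (1 + ‖w‖) / 2 ≤ ‖w‖ := by linarith
  calc truncatedStableKernel α m w
      ≤ 1 * (1 + ‖w‖) ^ m * ((1 + ‖w‖) / 2) ^ (-(finrank ℝ E : ℝ) - α) := by
        unfold truncatedStableKernel
        gcongr ?_ * _ * ?_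
        · exact min_le_left _ _
        · exact rpow_le_rpow_of_nonpos (by positivity) hw2 (by linarith)
    _ = 2 ^ ((finrank ℝ E : ℝ) + α) *
          ((1 + ‖w‖) ^ m * (1 + ‖w‖) ^ (-(finrank ℝ E : ℝ) - α)) := by
        rw [div_eq_mul_inv, mul_rpow (by positivity) (by norm_num), inv_rpow zero_le_two,
          ← rpow_neg zero_le_two]
        ring_nf
    _ = _ := by
        rw [← rpow_add (by positivity)]
        ring_nf

lemma one_add_norm_le_of_norm_le {l : ℝ} (hl : 1 ≤ l) {x : E} (hx : ‖x‖ ≤ l) (y : E) :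
    1 + ‖y‖ ≤ 2 * l * (1 + ‖l⁻¹ • (x - y)‖) := by
  have hl0 : 0 < l := by linarith
  have hy : ‖y‖ ≤ ‖x‖ + ‖x - y‖ := by simpa using norm_sub_le x (x - y)
  rw [norm_smul, norm_inv, Real.norm_of_nonneg hl0.le, mul_add, mul_one, ← mul_assoc,
    mul_assoc 2, mul_inv_cancel₀ hl0.ne', mul_one]
  nlinarith [norm_nonneg (x - y)]

lemma polyWeight_le {p q l : ℝ} (hp : 0 ≤ p) (hq : 0 ≤ q) (hl : 1 ≤ l) {x : E} (hx : ‖x‖ ≤ l)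
    (y : E) :
    polyWeight p q x y ≤
      2 * (2 * l * (1 + ‖l⁻¹ • (x - y)‖)) ^ p + 2 * (2 * l * (1 + ‖l⁻¹ • (x - y)‖)) ^ q := by
  have hx' : 1 + ‖x‖ ≤ 2 * l * (1 + ‖l⁻¹ • (x - y)‖) := by
    nlinarith [norm_nonneg (l⁻¹ • (x - y))]
  have hy := one_add_norm_le_of_norm_le hl hx y
  have bound : ∀ m : ℝ, 0 ≤ m →
      (1 + ‖x‖) ^ m + (1 + ‖y‖) ^ m ≤ 2 * (2 * l * (1 + ‖l⁻¹ • (x - y)‖)) ^ m := fun m hm => by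
    rw [two_mul]
    gcongr
  unfold polyWeight
  split_ifs
  · exact le_add_of_le_of_nonneg (bound p hp) (by positivity)
  · exact le_add_of_nonneg_of_le (by positivity) (bound q hq)

lemma min_mul_polyWeight_mul_rpow_le {α p q l : ℝ} (hp : 0 ≤ p) (hq : 0 ≤ q) (hl : 1 ≤ l)
    {x : E} (hx : ‖x‖ ≤ l) (y : E) :
    min 1 (‖x - y‖ ^ 2 / l ^ 2) * polyWeight p q x y * ‖x - y‖ ^ (-(finrank ℝ E : ℝ) - α) ≤
      l ^ (-(finrank ℝ E : ℝ) - α) *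
        (2 * (2 * l) ^ p * truncatedStableKernel α p (l⁻¹ • (x - y)) +
          2 * (2 * l) ^ q * truncatedStableKernel α q (l⁻¹ • (x - y))) := by
  have hl0 : 0 < l := by linarith
  set u := l⁻¹ • (x - y)
  have hnorm : ‖x - y‖ = l * ‖u‖ := by
    rw [norm_smul, norm_inv, Real.norm_of_nonneg hl0.le, mul_inv_cancel_left₀ hl0.ne']
  have hmin : min 1 (‖x - y‖ ^ 2 / l ^ 2) = min 1 (‖u‖ ^ 2) := by
    rw [hnorm, mul_pow, mul_div_cancel_left₀ _ (by positivity)]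
  have hW := polyWeight_le hp hq hl hx y
  rw [hmin, hnorm, mul_rpow hl0.le (norm_nonneg u)]
  calc min 1 (‖u‖ ^ 2) * polyWeight p q x y *
        (l ^ (-(finrank ℝ E : ℝ) - α) * ‖u‖ ^ (-(finrank ℝ E : ℝ) - α))
      ≤ min 1 (‖u‖ ^ 2) * (2 * (2 * l * (1 + ‖u‖)) ^ p + 2 * (2 * l * (1 + ‖u‖)) ^ q) *
          (l ^ (-(finrank ℝ E : ℝ) - α) * ‖u‖ ^ (-(finrank ℝ E : ℝ) - α)) := by gcongr
    _ = _ := by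
      simp only [mul_rpow (by positivity : (0:ℝ) ≤ 2 * l) (by positivity : (0:ℝ) ≤ 1 + ‖u‖)]
      unfold truncatedStableKernel
      ring

end Pointwise

section Integral

variable {E : Type*} [NormedAddCommGroup E] [NormedSpace ℝ E] [FiniteDimensional ℝ E]
  [MeasurableSpace E] [BorelSpace E] {μ : Measure E} [μ.IsAddHaarMeasure]

lemma integrable_truncatedStableKernel (hn : 1 ≤ finrank ℝ E) {α m : ℝ} (hm : 0 ≤ m)
    (hmα : m < α) (hα : α < 2) :
    Integrable (truncatedStableKernel (E := E) α m) μ := by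
  have hmeas : AEStronglyMeasurable (truncatedStableKernel (E := E) α m) μ := by
    unfold truncatedStableKernel; fun_prop
  rw [← integrableOn_univ, ← union_compl_self (ball (0 : E) 1), integrableOn_union]
  constructor
  · refine integrableOn_ball_of_norm_le_rpow hn (C := 2 ^ m)
      (α := (finrank ℝ E : ℝ) + α - 2) (by linarith) ?_ hmeas
    filter_upwards [ae_restrict_mem measurableSet_ball] with w hw
    rw [Real.norm_of_nonneg (truncatedStableKernel_nonneg α m w)]
    exact truncatedStableKernel_le_rpow_of_norm_lt_one hm (mem_ball_zero_iff.mp hw)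
  · have hdecay := (integrable_one_add_norm (μ := μ)
      (r := (finrank ℝ E : ℝ) + α - m) (by linarith)).const_mul (2 ^ ((finrank ℝ E : ℝ) + α))
    refine Integrable.mono' hdecay.integrableOn hmeas.restrict ?_
    filter_upwards [ae_restrict_mem measurableSet_ball.compl] with w hw
    rw [Real.norm_of_nonneg (truncatedStableKernel_nonneg α m w)]
    exact truncatedStableKernel_le_one_add_norm_rpow (by linarith) (by simpa using hw)

lemma integral_truncatedStableKernel_comp_inv_smul_sub (α m : ℝ) {l : ℝ} (hl : 0 ≤ l) (x : E) :
    ∫ y, truncatedStableKernel α m (l⁻¹ • (x - y)) ∂μ =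
      l ^ finrank ℝ E * ∫ w, truncatedStableKernel α m w ∂μ := by
  rw [integral_sub_left_eq_self (fun w => truncatedStableKernel α m (l⁻¹ • w)),
    Measure.integral_comp_inv_smul_of_nonneg μ _ hl, smul_eq_mul]

lemma integral_min_mul_polyWeight_mul_rpow_le (hn : 1 ≤ finrank ℝ E) {α p q l : ℝ}
    (hα : α < 2) (hp : 0 ≤ p) (hpα : p < α) (hq : 0 ≤ q) (hqα : q < α) (hl : 1 ≤ l)
    {x : E} (hx : ‖x‖ ≤ l) :
    ∫ y, min 1 (‖x - y‖ ^ 2 / l ^ 2) * polyWeight p q x y *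
        ‖x - y‖ ^ (-(finrank ℝ E : ℝ) - α) ∂μ ≤
      2 ^ (p + 1) * l ^ (p - α) * ∫ w, truncatedStableKernel α p w ∂μ +
        2 ^ (q + 1) * l ^ (q - α) * ∫ w, truncatedStableKernel α q w ∂μ := by
  have hl0 : 0 < l := by linarith
  have hscaled : ∀ {m}, 0 ≤ m → m < α →
      Integrable (fun y => truncatedStableKernel α m (l⁻¹ • (x - y))) μ := fun hm hmα =>
    ((integrable_truncatedStableKernel hn hm hmα hα).comp_smul
      (inv_ne_zero hl0.ne')).comp_sub_left x
  have hexp : ∀ m : ℝ, l ^ (-(finrank ℝ E : ℝ) - α) * (2 * (2 * l) ^ m * l ^ finrank ℝ E) =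
      2 ^ (m + 1) * l ^ (m - α) := fun m => by
    rw [mul_rpow zero_le_two hl0.le, rpow_add_one two_ne_zero, ← rpow_natCast]
    have : l ^ (-(finrank ℝ E : ℝ) - α) * l ^ m * l ^ (finrank ℝ E : ℝ) = l ^ (m - α) := by
      rw [← rpow_add hl0, ← rpow_add hl0]; ring_nf
    linear_combination 2 * 2 ^ m * this
  calc _ ≤ ∫ y, l ^ (-(finrank ℝ E : ℝ) - α) *
          (2 * (2 * l) ^ p * truncatedStableKernel α p (l⁻¹ • (x - y)) +
            2 * (2 * l) ^ q * truncatedStableKernel α q (l⁻¹ • (x - y))) ∂μ := by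
        refine integral_mono_of_nonneg (.of_forall fun y => by
          have := polyWeight_nonneg p q x y; positivity) ?_
          (.of_forall (min_mul_polyWeight_mul_rpow_le hp hq hl hx))
        exact (((hscaled hp hpα).const_mul _).add ((hscaled hq hqα).const_mul _)).const_mul _
    _ = _ := by
        rw [integral_const_mul, integral_add ((hscaled hp hpα).const_mul _)
            ((hscaled hq hqα).const_mul _), integral_const_mul, integral_const_mul,
          integral_truncatedStableKernel_comp_inv_smul_sub α p hl0.le,
          integral_truncatedStableKernel_comp_inv_smul_sub α q hl0.le, ← hexp p, ← hexp q]
        ring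

theorem exists_setIntegral_closedBall_integral_le (hn : 1 ≤ finrank ℝ E) {α p q : ℝ}
    (hα : α < 2) (hp : 0 ≤ p) (hpα : p < α) (hq : 0 ≤ q) (hqα : q < α) :
    ∃ c > 0, ∀ l : ℝ, 1 ≤ l →
      ∫ x in closedBall (0 : E) l, ∫ y, min 1 (‖x - y‖ ^ 2 / l ^ 2) * polyWeight p q x y *
          ‖x - y‖ ^ (-(finrank ℝ E : ℝ) - α) ∂μ ∂μ ≤
        c * (l ^ (finrank ℝ E : ℝ) + l ^ ((finrank ℝ E : ℝ) + p - α)) := by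
  set Kp := ∫ w, truncatedStableKernel α p w ∂μ
  set Kq := ∫ w, truncatedStableKernel α q w ∂μ
  set V := μ.real (ball (0 : E) 1)
  have hKp : 0 ≤ Kp := integral_nonneg (truncatedStableKernel_nonneg α p)
  have hKq : 0 ≤ Kq := integral_nonneg (truncatedStableKernel_nonneg α q)
  refine ⟨2 ^ (p + 1) * Kp * V + 2 ^ (q + 1) * Kq * V + 1, by positivity, fun l hl => ?_⟩
  have hl0 : 0 < l := by linarith
  have hinner : ∀ x ∈ closedBall (0 : E) l,
      ‖∫ y, min 1 (‖x - y‖ ^ 2 / l ^ 2) * polyWeight p q x y *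
          ‖x - y‖ ^ (-(finrank ℝ E : ℝ) - α) ∂μ‖ ≤
        2 ^ (p + 1) * l ^ (p - α) * Kp + 2 ^ (q + 1) * Kq := fun x hx => by
    rw [Real.norm_of_nonneg (integral_nonneg fun y => by
      have := polyWeight_nonneg p q x y; positivity)]
    refine (integral_min_mul_polyWeight_mul_rpow_le hn hα hp hpα hq hqα hl
      (mem_closedBall_zero_iff.mp hx)).trans ?_
    have : l ^ (q - α) ≤ 1 := rpow_le_one_of_one_le_of_nonpos hl (by linarith)
    gcongr
    exact mul_le_of_le_one_right (by positivity) this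
  have hpow : l ^ (p - α) * l ^ finrank ℝ E = l ^ ((finrank ℝ E : ℝ) + p - α) := by
    rw [← rpow_natCast, ← rpow_add hl0]; ring_nf
  have hX : 0 ≤ l ^ (finrank ℝ E : ℝ) := by positivity
  have hY : 0 ≤ l ^ ((finrank ℝ E : ℝ) + p - α) := by positivity
  have ha : 0 ≤ 2 ^ (p + 1) * Kp * V := by positivity
  have hb : 0 ≤ 2 ^ (q + 1) * Kq * V := by positivity
  calc _ ≤ (2 ^ (p + 1) * l ^ (p - α) * Kp + 2 ^ (q + 1) * Kq) * μ.real (closedBall (0 : E) l) :=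
        (le_abs_self _).trans
          (norm_setIntegral_le_of_norm_le_const measure_closedBall_lt_top hinner)
    _ = 2 ^ (p + 1) * Kp * V * l ^ ((finrank ℝ E : ℝ) + p - α) +
          2 ^ (q + 1) * Kq * V * l ^ (finrank ℝ E : ℝ) := by
        rw [Measure.addHaar_real_closedBall μ _ hl0.le, ← hpow, rpow_natCast]
        ring
    _ ≤ _ := by nlinarith [mul_nonneg ha hX, mul_nonneg hb hY]

end Integral

theorem stmt_18_general (d : ℕ) (hd : 1 ≤ d) (α p q : ℝ)
    (hα2 : α < 2)
    (hp0 : 0 ≤ p) (hpα : p < α) (hq0 : 0 ≤ q) (hqα : q < α)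
    (W : EuclideanSpace ℝ (Fin d) → EuclideanSpace ℝ (Fin d) → ℝ)
    (hW : ∀ x y, W x y =
      if ‖x - y‖ < 1 then (1 + ‖x‖) ^ p + (1 + ‖y‖) ^ p
      else (1 + ‖x‖) ^ q + (1 + ‖y‖) ^ q) :
    (∃ c > 0, ∀ l : ℝ, 1 ≤ l →
      (∫ x in {x : EuclideanSpace ℝ (Fin d) | ‖x‖ ≤ l},
        ∫ y, min 1 (‖x - y‖ ^ 2 / l ^ 2) * W x y * ‖x - y‖ ^ (-(d:ℝ) - α))
        ≤ c * (l ^ (d:ℝ) + l ^ ((d:ℝ) + p - α)))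
    ∧ ∃ M : ℝ, ∀ L ≥ (1:ℝ), ∃ l ≥ L,
        l ^ (-(d:ℝ)) *
          (∫ x in {x : EuclideanSpace ℝ (Fin d) | ‖x‖ ≤ l},
            ∫ y, min 1 (‖x - y‖ ^ 2 / l ^ 2) * W x y * ‖x - y‖ ^ (-(d:ℝ) - α)) ≤ M := by
  obtain rfl : W = polyWeight p q := funext fun x => funext (hW x)
  have hball : ∀ l : ℝ, {x : EuclideanSpace ℝ (Fin d) | ‖x‖ ≤ l} = closedBall 0 l := fun l => by
    ext; simp
  obtain ⟨c, hc, hbound⟩ := exists_setIntegral_closedBall_integral_le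
    (μ := (volume : Measure (EuclideanSpace ℝ (Fin d)))) (by simpa using hd) hα2 hp0 hpα hq0 hqα
  simp only [finrank_euclideanSpace_fin, ← hball] at hbound
  refine ⟨⟨c, hc, hbound⟩, 2 * c, fun L hL => ⟨L, le_rfl, ?_⟩⟩
  have hL0 : 0 < L := by linarith
  have hdecay : L ^ (p - α) ≤ 1 := rpow_le_one_of_one_le_of_nonpos hL (by linarith)
  calc _ ≤ L ^ (-(d:ℝ)) * (c * (L ^ (d:ℝ) + L ^ ((d:ℝ) + p - α))) := by
        gcongr; exact hbound L hL
    _ = c * (1 + L ^ (p - α)) := by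
        rw [mul_left_comm, mul_add, ← rpow_add hL0, ← rpow_add hL0, neg_add_cancel, rpow_zero]
        ring_nf
    _ ≤ 2 * c := by nlinarith

theorem stmt_18 (d : ℕ) (hd : 1 ≤ d) (α p q : ℝ)
    (hα0 : 0 < α) (hα2 : α < 2)
    (hp0 : 0 ≤ p) (hpα : p < α) (hq0 : 0 ≤ q) (hqα : q < α)
    (W : EuclideanSpace ℝ (Fin d) → EuclideanSpace ℝ (Fin d) → ℝ)
    (hW : ∀ x y, W x y =
      if ‖x - y‖ < 1 then (1 + ‖x‖) ^ p + (1 + ‖y‖) ^ p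
      else (1 + ‖x‖) ^ q + (1 + ‖y‖) ^ q) :
    (∃ c > 0, ∀ l : ℝ, 1 ≤ l →
      (∫ x in {x : EuclideanSpace ℝ (Fin d) | ‖x‖ ≤ l},
        ∫ y, min 1 (‖x - y‖ ^ 2 / l ^ 2) * W x y * ‖x - y‖ ^ (-(d:ℝ) - α))
        ≤ c * (l ^ (d:ℝ) + l ^ ((d:ℝ) + p - α)))
    ∧ ∃ M : ℝ, ∀ L ≥ (1:ℝ), ∃ l ≥ L,
        l ^ (-(d:ℝ)) *
          (∫ x in {x : EuclideanSpace ℝ (Fin d) | ‖x‖ ≤ l},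
            ∫ y, min 1 (‖x - y‖ ^ 2 / l ^ 2) * W x y * ‖x - y‖ ^ (-(d:ℝ) - α)) ≤ M :=
  stmt_18_general d hd α p q hα2 hp0 hpα hq0 hqα W hW
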